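/- Let G be the group with presentation ⟨u, x, y, z | u² = xyz, x^a = y^b = z^c = 1⟩ where a, b, c are distinct quasi-primes with {a,b,c} ≠ {3,4,5}. Then G is the normal closure of the two-element set {xy, u}; in particular G has weight at most 2. -/
import Mathlib


/-- A positive integer is a *quasi-prime* if it equals `4` or is an odd prime. -/
def QuasiPrime (n : ℕ) : Prop := n = 4 ∨ (n.Prime ∧ Odd n)

/-- Generators `u, x, y, z`. -/
inductive Gen4 : Type
  | u | x | y | z
deriving DecidableEq

/-- Relators of the presentation `⟨u,x,y,z | u² = xyz, xᵃ = yᵇ = z^c = 1⟩`. -/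
def rels4 (a b c : ℕ) : Set (FreeGroup Gen4) :=
  { FreeGroup.of Gen4.u ^ 2 *
      (FreeGroup.of Gen4.x * FreeGroup.of Gen4.y * FreeGroup.of Gen4.z)⁻¹,
    FreeGroup.of Gen4.x ^ a, FreeGroup.of Gen4.y ^ b, FreeGroup.of Gen4.z ^ c }

lemma quasiPrime_coprime {a b : ℕ} (ha : QuasiPrime a) (hb : QuasiPrime b) (hab : a ≠ b) :
    Nat.Coprime a b := by
  have key : ∀ p : ℕ, p.Prime → Odd p → Nat.Coprime 4 p := by
    intro p hp hodd
    have hp2 : p ≠ 2 := by rintro rfl; exact (Nat.not_odd_iff_even.mpr (by norm_num)) hodd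
    have : Nat.Coprime 2 p := (Nat.coprime_primes Nat.prime_two hp).mpr (Ne.symm hp2)
    have h4 : (4 : ℕ) = 2 ^ 2 := by norm_num
    rw [h4]; exact Nat.Coprime.pow_left _ this
  rcases ha with rfl | ⟨hpa, hoa⟩
  · rcases hb with rfl | ⟨hpb, hob⟩
    · exact absurd rfl hab
    · exact key b hpb hob
  · rcases hb with rfl | ⟨hpb, hob⟩
    · exact (key a hpa hoa).symm
    · exact (Nat.coprime_primes hpa hpb).mpr hab

lemma rel_eq_one {a b c : ℕ} {r : FreeGroup Gen4} (hr : r ∈ rels4 a b c) :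
    PresentedGroup.mk (rels4 a b c) r = 1 := by
  exact (QuotientGroup.eq_one_iff r).mpr (Subgroup.subset_normalClosure hr)

theorem weight_le_two (a b c : ℕ) (ha : QuasiPrime a) (hb : QuasiPrime b)
    (hc : QuasiPrime c) (hab : a ≠ b) (hac : a ≠ c) (hbc : b ≠ c)
    (h345 : ({a, b, c} : Finset ℕ) ≠ {3, 4, 5}) :
    Subgroup.normalClosure
      ({PresentedGroup.of Gen4.x * PresentedGroup.of Gen4.y, PresentedGroup.of Gen4.u} :
        Set (PresentedGroup (rels4 a b c))) = ⊤ := by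
  set G := PresentedGroup (rels4 a b c)
  set N : Subgroup G := Subgroup.normalClosure
      ({PresentedGroup.of Gen4.x * PresentedGroup.of Gen4.y, PresentedGroup.of Gen4.u} : Set G)
  have hN : N.Normal := Subgroup.normalClosure_normal
  set π : G →* G ⧸ N := QuotientGroup.mk' N
  -- relations in G
  have hrel1 : (PresentedGroup.of Gen4.u : G) ^ 2 *
      (PresentedGroup.of Gen4.x * PresentedGroup.of Gen4.y * PresentedGroup.of Gen4.z)⁻¹ = 1 := by
    have := rel_eq_one (a := a) (b := b) (c := c)
      (r := FreeGroup.of Gen4.u ^ 2 *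
        (FreeGroup.of Gen4.x * FreeGroup.of Gen4.y * FreeGroup.of Gen4.z)⁻¹)
      (by simp [rels4])
    simpa [PresentedGroup.of] using this
  have hrelx : (PresentedGroup.of Gen4.x : G) ^ a = 1 := by
    have := rel_eq_one (a := a) (b := b) (c := c) (r := FreeGroup.of Gen4.x ^ a)
      (by simp [rels4])
    simpa [PresentedGroup.of] using this
  have hrely : (PresentedGroup.of Gen4.y : G) ^ b = 1 := by
    have := rel_eq_one (a := a) (b := b) (c := c) (r := FreeGroup.of Gen4.y ^ b)
      (by simp [rels4])
    simpa [PresentedGroup.of] using this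
  -- membership facts
  have hxy : (PresentedGroup.of Gen4.x * PresentedGroup.of Gen4.y : G) ∈ N :=
    Subgroup.subset_normalClosure (by left; rfl)
  have hu : (PresentedGroup.of Gen4.u : G) ∈ N :=
    Subgroup.subset_normalClosure (by right; rfl)
  have hπxy : π (PresentedGroup.of Gen4.x) * π (PresentedGroup.of Gen4.y) = 1 := by
    rw [← map_mul]; exact (QuotientGroup.eq_one_iff _).mpr hxy
  have hπu : π (PresentedGroup.of Gen4.u) = 1 := (QuotientGroup.eq_one_iff _).mpr hu
  -- x ∈ N
  have hπx : π (PresentedGroup.of Gen4.x) = 1 := by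
    set g := π (PresentedGroup.of Gen4.x) with hg
    have hga : g ^ a = 1 := by rw [hg, ← map_pow, hrelx, map_one]
    have hgb : g ^ b = 1 := by
      have hyx : π (PresentedGroup.of Gen4.y) = g⁻¹ :=
        eq_inv_of_mul_eq_one_right hπxy
      have : π (PresentedGroup.of Gen4.y) ^ b = 1 := by rw [← map_pow, hrely, map_one]
      rw [hyx, inv_pow, inv_eq_one] at this
      exact this
    have h1 : orderOf g ∣ Nat.gcd a b :=
      Nat.dvd_gcd (orderOf_dvd_of_pow_eq_one hga) (orderOf_dvd_of_pow_eq_one hgb)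
    have : orderOf g = 1 := Nat.eq_one_of_dvd_one (by rwa [quasiPrime_coprime ha hb hab] at h1)
    exact orderOf_eq_one_iff.mp this
  have hx : (PresentedGroup.of Gen4.x : G) ∈ N := (QuotientGroup.eq_one_iff _).mp hπx
  have hy : (PresentedGroup.of Gen4.y : G) ∈ N := by
    have : (PresentedGroup.of Gen4.y : G) =
        (PresentedGroup.of Gen4.x)⁻¹ * (PresentedGroup.of Gen4.x * PresentedGroup.of Gen4.y) := by
      group
    rw [this]; exact N.mul_mem (N.inv_mem hx) hxy
  have hz : (PresentedGroup.of Gen4.z : G) ∈ N := by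
    have : (PresentedGroup.of Gen4.z : G) =
        (PresentedGroup.of Gen4.x * PresentedGroup.of Gen4.y)⁻¹ *
          ((PresentedGroup.of Gen4.u) ^ 2) := by
      have h := hrel1
      rw [mul_inv_eq_one] at h
      rw [h]; group
    rw [this]
    exact N.mul_mem (N.inv_mem hxy) (N.pow_mem hu 2)
  -- conclude
  refine top_le_iff.mp ?_
  rw [← PresentedGroup.closure_range_of (rels4 a b c)]
  refine Subgroup.closure_le N |>.mpr ?_
  rintro _ ⟨g, rfl⟩
  cases g
  · exact hu
  · exact hx
  · exact hy
  · exact hz
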